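/- arXiv:2006.09797 — 3 statements merged into one kernel-verified Lean document; each statement's English description precedes it below -/
import Mathlib

section
/- Let μ ∈ P₂(X), g = P_μ ∇log(μ/π), and for t ≥ 0 define φ_t = I - t g. Assume ‖k(x,·)‖_{H₀} ≤ B, ‖∇_x k(x,·)‖_H ≤ B, and I_Stein(μ|π) ≤ C. Then for all x ∈ X, ‖t Jg(x)‖_op ≤ t B √C, and for every t < 1/(B√C) the map φ_t is a diffeomorphism of X. Moreover, if α > 1 and t ≤ (α-1)/(α B C^{1/2}), then ‖(Jφ_t(x))^{-1}‖_op ≤ α for every x. -/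
/-!
Since `g x = (⟪gH i, φ x⟫)ᵢ`, its Jacobian is `h ↦ (⟪gH i, Dφ x h⟫)ᵢ`, whose operator norm is at
most `‖(gH i)ᵢ‖ · ‖Dφ x‖ ≤ √C · B` by Cauchy–Schwarz. Hence `x ↦ x - t g x` differs from the
identity by a `tB√C`-Lipschitz map; for `tB√C < 1` it is a homeomorphism whose derivative
`I - t Jg x` is invertible by the Neumann series, so its inverse is differentiable, and the
Neumann series also bounds `‖(I - t Jg x)⁻¹‖` by `(1 - tB√C)⁻¹ ≤ α`.
-/

open MeasureTheory Function Set
open scoped NNReal RealInnerProductSpace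

theorem ContinuousLinearMap.opNorm_le_sqrt_sum_sq_apply_single {ι F : Type*} [Fintype ι]
    [DecidableEq ι] [SeminormedAddCommGroup F] [NormedSpace ℝ F]
    (L : EuclideanSpace ℝ ι →L[ℝ] F) :
    ‖L‖ ≤ √(∑ i, ‖L (EuclideanSpace.single i 1)‖ ^ 2) := by
  refine L.opNorm_le_bound (by positivity) fun v => ?_
  have hv : v = ∑ i, v i • EuclideanSpace.single i (1 : ℝ) := by
    simpa [EuclideanSpace.basisFun_apply] using ((EuclideanSpace.basisFun ι ℝ).sum_repr v).symm
  calc ‖L v‖ = ‖∑ i, v i • L (EuclideanSpace.single i 1)‖ := by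
        conv_lhs => rw [hv]
        simp only [map_sum, map_smul]
    _ ≤ ∑ i, ‖v i‖ * ‖L (EuclideanSpace.single i 1)‖ := by
        refine (norm_sum_le _ _).trans_eq ?_
        simp only [norm_smul]
    _ ≤ √(∑ i, ‖v i‖ ^ 2) * √(∑ i, ‖L (EuclideanSpace.single i 1)‖ ^ 2) :=
        Real.sum_mul_le_sqrt_mul_sqrt _ _ _
    _ = _ := by rw [← EuclideanSpace.norm_eq, mul_comm]

section InnerFamily

variable {ι E H : Type*} [NormedAddCommGroup H] [InnerProductSpace ℝ H]

noncomputable def innerFamilyCLM [Fintype ι] (v : ι → H) : H →L[ℝ] EuclideanSpace ℝ ι :=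
  (EuclideanSpace.equiv ι ℝ).symm.toContinuousLinearMap.comp
    (ContinuousLinearMap.pi fun i => innerSL ℝ (v i))

@[simp]
theorem innerFamilyCLM_apply [Fintype ι] (v : ι → H) (h : H) (i : ι) :
    innerFamilyCLM v h i = ⟪v i, h⟫ :=
  rfl

theorem opNorm_innerFamilyCLM_le [Fintype ι] (v : ι → H) :
    ‖innerFamilyCLM v‖ ≤ √(∑ i, ‖v i‖ ^ 2) := by
  refine ContinuousLinearMap.opNorm_le_bound _ (by positivity) fun h => ?_
  rw [EuclideanSpace.norm_eq, ← Real.sqrt_sq (norm_nonneg h), ← Real.sqrt_mul (by positivity),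
    Finset.sum_mul]
  gcongr with i
  rw [innerFamilyCLM_apply, ← mul_pow]
  exact pow_le_pow_left₀ (norm_nonneg _) (norm_inner_le_norm _ _) 2

theorem norm_le_of_hasFDerivAt_inner_family [Fintype ι] [NormedAddCommGroup E]
    [NormedSpace ℝ E] {v : ι → H} {φ : E → H} {φ' : E →L[ℝ] H} {g : E → EuclideanSpace ℝ ι}
    {g' : E →L[ℝ] EuclideanSpace ℝ ι} {x : E} (hφ : HasFDerivAt φ φ' x)
    (hg : ∀ y i, g y i = ⟪v i, φ y⟫) (hg' : HasFDerivAt g g' x) :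
    ‖g'‖ ≤ √(∑ i, ‖v i‖ ^ 2) * ‖φ'‖ := by
  have hg_eq : g = innerFamilyCLM v ∘ φ := funext fun y => by ext i; exact hg y i
  rw [hg'.unique (hg_eq ▸ (innerFamilyCLM v).hasFDerivAt.comp x hφ)]
  exact (ContinuousLinearMap.opNorm_comp_le _ _).trans
    (mul_le_mul_of_nonneg_right (opNorm_innerFamilyCLM_le v) (norm_nonneg _))

end InnerFamily

section PerturbationOfIdentity

variable {E : Type*} [NormedAddCommGroup E] [NormedSpace ℝ E] {f : E → E}
  {f' : E → E →L[ℝ] E}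

theorem approximatesLinearOn_id_of_nnnorm_fderiv_sub_id_le {c : ℝ≥0}
    (hf : ∀ x, HasFDerivAt f (f' x) x)
    (hc : ∀ x, ‖f' x - ContinuousLinearMap.id ℝ E‖₊ ≤ c) :
    ApproximatesLinearOn f (ContinuousLinearMap.id ℝ E) univ c := by
  rw [ApproximatesLinearOn.approximatesLinearOn_iff_lipschitzOnWith]
  exact convex_univ.lipschitzOnWith_of_nnnorm_hasFDerivWithin_le
    (fun x _ => ((hf x).sub (ContinuousLinearMap.id ℝ E).hasFDerivAt).hasFDerivWithinAt)
    fun x _ => hc x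

theorem exists_homeomorph_of_nnnorm_fderiv_sub_id_le [CompleteSpace E] {c : ℝ≥0}
    (hf : ∀ x, HasFDerivAt f (f' x) x)
    (hc : ∀ x, ‖f' x - ContinuousLinearMap.id ℝ E‖₊ ≤ c) (hc1 : c < 1) :
    ∃ e : E ≃ₜ E, ⇑e = f := by
  have hf' := approximatesLinearOn_id_of_nnnorm_fderiv_sub_id_le hf hc
  rw [← ContinuousLinearEquiv.coe_refl] at hf'
  refine ⟨ApproximatesLinearOn.toHomeomorph f hf' ?_, rfl⟩
  rcases subsingleton_or_nontrivial E with hE | hE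
  · exact Or.inl hE
  · right
    simpa [ContinuousLinearEquiv.coe_refl, ContinuousLinearMap.nnnorm_id] using hc1

theorem bijective_and_differentiable_invFun_of_norm_fderiv_sub_id_le [CompleteSpace E] {c : ℝ}
    (hf : ∀ x, HasFDerivAt f (f' x) x)
    (hc : ∀ x, ‖f' x - ContinuousLinearMap.id ℝ E‖ ≤ c) (hc1 : c < 1) :
    Bijective f ∧ Differentiable ℝ (invFun f) := by
  obtain ⟨e, rfl⟩ := exists_homeomorph_of_nnnorm_fderiv_sub_id_le (c := c.toNNReal) hf
    (fun x => (hc x).trans c.le_coe_toNNReal) (by simpa using hc1)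
  have hinv : invFun e = e.symm :=
    funext fun y => e.injective <| by rw [rightInverse_invFun e.surjective y, e.apply_symm_apply]
  refine ⟨e.bijective, hinv ▸ fun y => ?_⟩
  -- `f' x = 1 - (1 - f' x)` is invertible by the Neumann series
  have hunit : ‖ContinuousLinearMap.id ℝ E - f' (e.symm y)‖ < 1 := by
    rw [norm_sub_rev]
    exact (hc _).trans_lt hc1
  let u := ContinuousLinearEquiv.unitsEquiv ℝ E (Units.oneSub _ hunit)
  have hu : HasFDerivAt e (u : E →L[ℝ] E) (e.symm y) := by
    convert hf (e.symm y)
    change 1 - (ContinuousLinearMap.id ℝ E - f' (e.symm y)) = f' (e.symm y)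
    rw [ContinuousLinearMap.one_def, sub_sub_cancel]
  exact (hu.of_local_left_inverse e.symm.continuous.continuousAt
    (Filter.Eventually.of_forall e.apply_symm_apply)).differentiableAt

end PerturbationOfIdentity

theorem NormedRing.norm_inverse_one_sub_le {R : Type*} [NormedRing R] [HasSummableGeomSeries R]
    {x : R} (h1 : ‖(1 : R)‖ ≤ 1) (hx : ‖x‖ < 1) : ‖Ring.inverse (1 - x)‖ ≤ (1 - ‖x‖)⁻¹ := by
  rw [← geom_series_eq_inverse x hx]
  linarith [tsum_geometric_le_of_norm_lt_one x hx]

theorem svgd_phase_map_diffeomorphism_general {d : ℕ}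
    {H₀ : Type*} [NormedAddCommGroup H₀] [InnerProductSpace ℝ H₀]
    (φ : EuclideanSpace ℝ (Fin d) → H₀)
    (Dφ : EuclideanSpace ℝ (Fin d) → EuclideanSpace ℝ (Fin d) →L[ℝ] H₀)
    (hφdiff : ∀ x, HasFDerivAt φ (Dφ x) x)
    (B : ℝ) (hB : 0 < B)
    (hdkB : ∀ x, Real.sqrt (∑ i, ‖Dφ x (EuclideanSpace.single i 1)‖ ^ 2) ≤ B)
    (gH : Fin d → H₀)                                                 -- S_μ ∇log(μ/π)
    (g : EuclideanSpace ℝ (Fin d) → EuclideanSpace ℝ (Fin d))        -- P_μ ∇log(μ/π)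
    (hg : ∀ x i, g x i = ⟪gH i, φ x⟫)
    (Jg : EuclideanSpace ℝ (Fin d) →
      EuclideanSpace ℝ (Fin d) →L[ℝ] EuclideanSpace ℝ (Fin d))       -- Jacobian of g
    (hJg : ∀ x, HasFDerivAt g (Jg x) x)
    (C : ℝ) (hC : 0 < C)
    (hIC : (∑ i, ‖gH i‖ ^ 2) ≤ C) :                                   -- I_Stein(μ|π) ≤ C
    (∀ t : ℝ, 0 ≤ t → ∀ x, ‖t • Jg x‖ ≤ t * (B * Real.sqrt C)) ∧
    (∀ t : ℝ, 0 ≤ t → t < 1 / (B * Real.sqrt C) →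
      Function.Bijective (fun x => x - t • g x) ∧
      Differentiable ℝ (Function.invFun (fun x => x - t • g x))) ∧
    (∀ α : ℝ, 1 < α → ∀ t : ℝ, 0 ≤ t → t ≤ (α - 1) / (α * B * Real.sqrt C) → ∀ x,
      IsUnit (ContinuousLinearMap.id ℝ (EuclideanSpace ℝ (Fin d)) - t • Jg x) ∧
      ‖Ring.inverse (ContinuousLinearMap.id ℝ (EuclideanSpace ℝ (Fin d)) - t • Jg x)‖
        ≤ α) := by
  have hK : 0 < B * √C := mul_pos hB (Real.sqrt_pos.2 hC)
  have hJ : ∀ x, ‖Jg x‖ ≤ B * √C := fun x =>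
    (norm_le_of_hasFDerivAt_inner_family (hφdiff x) hg (hJg x)).trans <| by
      rw [mul_comm B]
      gcongr
      exact ((Dφ x).opNorm_le_sqrt_sum_sq_apply_single).trans (hdkB x)
  have hJt : ∀ t : ℝ, 0 ≤ t → ∀ x, ‖t • Jg x‖ ≤ t * (B * √C) := fun t ht x => by
    rw [norm_smul, Real.norm_of_nonneg ht]
    exact mul_le_mul_of_nonneg_left (hJ x) ht
  refine ⟨hJt, fun t ht htK => ?_, fun α hα t ht htα x => ?_⟩
  · refine bijective_and_differentiable_invFun_of_norm_fderiv_sub_id_le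
      (f' := fun x => ContinuousLinearMap.id ℝ _ - t • Jg x)
      (fun x => (hasFDerivAt_id x).sub ((hJg x).const_smul t)) (fun x => ?_)
      ((lt_div_iff₀ hK).1 htK)
    rw [sub_sub_cancel_left, norm_neg]
    exact hJt t ht x
  · have hα0 : 0 < α := zero_lt_one.trans hα
    have hsmall : ‖t • Jg x‖ ≤ 1 - α⁻¹ := calc
      ‖t • Jg x‖ ≤ t * (B * √C) := hJt t ht x
      _ ≤ (α - 1) / (α * B * √C) * (B * √C) := mul_le_mul_of_nonneg_right htα hK.le
      _ = 1 - α⁻¹ := by field_simp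
    have hlt : ‖t • Jg x‖ < 1 := hsmall.trans_lt (sub_lt_self _ (inv_pos.2 hα0))
    rw [← ContinuousLinearMap.one_def]
    refine ⟨isUnit_one_sub_of_norm_lt_one hlt,
      (NormedRing.norm_inverse_one_sub_le ContinuousLinearMap.norm_id_le hlt).trans ?_⟩
    exact inv_le_of_inv_le₀ hα0 (by linarith)

/-- **`φ_t = I - t g` is a diffeomorphism for small `t`, with controlled inverse Jacobian.**

`X = ℝ^d`, `μ ∈ P₂(X)`, `g = P_μ ∇log(μ/π)`, `φ_t = I - t g`.  The RKHS `H₀` of `k` is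
modelled via a feature map `φ` with `k x y = ⟪φ x, φ y⟫` and derivative feature map
`Dφ`; `gH = S_μ∇log(μ/π)` and `g` agrees with it pointwise (reproducing property);
`Jg` is the Jacobian of `g`.  Assumptions: `‖k(x,·)‖_{H₀} ≤ B`, `‖∇ₓk(x,·)‖_H ≤ B`,
and `I_Stein(μ|π) = ‖gH‖²_H ≤ C`.  Conclusions:
(1) `‖t Jg(x)‖_op ≤ t B √C` for all `t ≥ 0` and `x`;
(2) for `0 ≤ t < 1/(B√C)` the map `φ_t` is a diffeomorphism (a bijection of `ℝ^d` with
    differentiable inverse);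
(3) if `α > 1` and `t ≤ (α-1)/(αB√C)` then `Jφ_t(x) = I - t Jg(x)` is invertible with
    `‖(Jφ_t(x))⁻¹‖_op ≤ α` for every `x`. -/
theorem svgd_phase_map_diffeomorphism {d : ℕ}
    {H₀ : Type*} [NormedAddCommGroup H₀] [InnerProductSpace ℝ H₀] [CompleteSpace H₀]
    (k : EuclideanSpace ℝ (Fin d) → EuclideanSpace ℝ (Fin d) → ℝ)
    (φ : EuclideanSpace ℝ (Fin d) → H₀)
    (Dφ : EuclideanSpace ℝ (Fin d) → EuclideanSpace ℝ (Fin d) →L[ℝ] H₀)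
    (hk : ∀ x y, k x y = ⟪φ x, φ y⟫)
    (hφdiff : ∀ x, HasFDerivAt φ (Dφ x) x)
    (B : ℝ) (hB : 0 < B)
    (hkB : ∀ x, ‖φ x‖ ≤ B)
    (hdkB : ∀ x, Real.sqrt (∑ i, ‖Dφ x (EuclideanSpace.single i 1)‖ ^ 2) ≤ B)
    (μ : Measure (EuclideanSpace ℝ (Fin d))) [IsProbabilityMeasure μ]
    (dlog : EuclideanSpace ℝ (Fin d) → EuclideanSpace ℝ (Fin d))     -- ∇log(μ/π)
    (gH : Fin d → H₀)                                                 -- S_μ ∇log(μ/π)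
    (hgH : ∀ i, gH i = ∫ x, dlog x i • φ x ∂μ)
    (g : EuclideanSpace ℝ (Fin d) → EuclideanSpace ℝ (Fin d))        -- P_μ ∇log(μ/π)
    (hg : ∀ x i, g x i = ⟪gH i, φ x⟫)
    (Jg : EuclideanSpace ℝ (Fin d) →
      EuclideanSpace ℝ (Fin d) →L[ℝ] EuclideanSpace ℝ (Fin d))       -- Jacobian of g
    (hJg : ∀ x, HasFDerivAt g (Jg x) x)
    (C : ℝ) (hC : 0 < C)
    (hIC : (∑ i, ‖gH i‖ ^ 2) ≤ C) :                                   -- I_Stein(μ|π) ≤ C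
    (∀ t : ℝ, 0 ≤ t → ∀ x, ‖t • Jg x‖ ≤ t * (B * Real.sqrt C)) ∧
    (∀ t : ℝ, 0 ≤ t → t < 1 / (B * Real.sqrt C) →
      Function.Bijective (fun x => x - t • g x) ∧
      Differentiable ℝ (Function.invFun (fun x => x - t • g x))) ∧
    (∀ α : ℝ, 1 < α → ∀ t : ℝ, 0 ≤ t → t ≤ (α - 1) / (α * B * Real.sqrt C) → ∀ x,
      IsUnit (ContinuousLinearMap.id ℝ (EuclideanSpace ℝ (Fin d)) - t • Jg x) ∧
      ‖Ring.inverse (ContinuousLinearMap.id ℝ (EuclideanSpace ℝ (Fin d)) - t • Jg x)‖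
        ≤ α) :=
  svgd_phase_map_diffeomorphism_general φ Dφ hφdiff B hB hdkB gH g hg Jg hJg C hC hIC
end

section
/- Let μ_0 ∈ P₂(X) have finite variance, and define the SVGD iterates μ_{n+1} = (I - γ P_{μ_n} ∇log(μ_n/π))_# μ_n. Assume the map z ↦ P_{μ_n} ∇log(μ_n/π)(z) is L-Lipschitz for every n (which holds under: ‖k(x,·)‖_{H₀} ≤ B, ‖∇_x k(x,·)‖_H ≤ B; ∇log π M-Lipschitz and bounded by C_V; k and ∇k D-Lipschitz; with L = C_V(D+1)+BM). Then for every T > 0 and every n ≤ T/γ: var(μ_n)^{1/2} ≤ var(μ_0)^{1/2} e^{TL}. -/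
/-!
The SVGD step `x ↦ x - γ g_n x` is `(1 + γL)`-Lipschitz. Pushing a measure forward by a
`K`-Lipschitz map `T` multiplies its variance by at most `K²`: the mean `m` minimises
`c ↦ E‖X - c‖²`, so the variance of `T_# ν` is at most `E‖T X - T m‖² ≤ K² var ν`.
Iterating gives `var(μ_n)^{1/2} ≤ (1 + γL)^n var(μ_0)^{1/2}`, and
`(1 + γL)^n ≤ e^{nγL} ≤ e^{TL}`.
-/

open MeasureTheory

open scoped NNReal ENNReal

noncomputable def totalVariance {E : Type*} [NormedAddCommGroup E] [NormedSpace ℝ E]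
    [MeasurableSpace E] (ν : Measure E) : ℝ :=
  ∫ x, ‖x - ∫ y, y ∂ν‖ ^ 2 ∂ν

lemma MeasureTheory.MemLp.integrable_norm_sub_sq {E : Type*} [NormedAddCommGroup E]
    [MeasurableSpace E] {ν : Measure E} [IsFiniteMeasure ν] (h : MemLp id 2 ν) (c : E) :
    Integrable (fun x => ‖x - c‖ ^ 2) ν :=
  (h.sub (memLp_const c)).integrable_norm_pow two_ne_zero

section TotalVariance

variable {E : Type*} [NormedAddCommGroup E] [InnerProductSpace ℝ E] [CompleteSpace E]
  [MeasurableSpace E] {ν : Measure E} [IsProbabilityMeasure ν]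

lemma integral_norm_sub_sq_eq_totalVariance_add (h : MemLp id 2 ν) (c : E) :
    ∫ x, ‖x - c‖ ^ 2 ∂ν = totalVariance ν + ‖∫ y, y ∂ν - c‖ ^ 2 := by
  set m := ∫ y, y ∂ν
  have hid : Integrable (fun x => x) ν := h.integrable one_le_two
  have hcentered : Integrable (fun x => x - m) ν := hid.sub (integrable_const m)
  have hcross : Integrable (fun x => 2 * inner ℝ (m - c) (x - m)) ν :=
    (hcentered.const_inner (m - c)).const_mul 2
  have hcross_zero : ∫ x, inner ℝ (m - c) (x - m) ∂ν = 0 := by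
    rw [integral_inner hcentered, integral_sub hid (integrable_const m)]
    simp [m]
  have hexpand : (fun x => ‖x - c‖ ^ 2) =
      fun x => ‖x - m‖ ^ 2 + 2 * inner ℝ (m - c) (x - m) + ‖m - c‖ ^ 2 := by
    ext x
    rw [← sub_add_sub_cancel x m c, norm_add_sq_real, real_inner_comm]
  have hsum : Integrable (fun x => ‖x - m‖ ^ 2 + 2 * inner ℝ (m - c) (x - m)) ν :=
    (h.integrable_norm_sub_sq m).add hcross
  rw [hexpand, integral_add hsum (integrable_const _),
    integral_add (h.integrable_norm_sub_sq m) hcross, integral_const_mul, hcross_zero,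
    integral_const]
  simp [totalVariance, m]

lemma totalVariance_le_integral_norm_sub_sq (h : MemLp id 2 ν) (c : E) :
    totalVariance ν ≤ ∫ x, ‖x - c‖ ^ 2 ∂ν := by
  rw [integral_norm_sub_sq_eq_totalVariance_add h c]
  exact le_add_of_nonneg_right (sq_nonneg _)

end TotalVariance

section Lipschitz

variable {E : Type*} [NormedAddCommGroup E] [MeasurableSpace E] [BorelSpace E]
  {ν : Measure E} {T : E → E} {K : ℝ≥0}

lemma MeasureTheory.MemLp.map_of_lipschitzWith [IsFiniteMeasure ν] {p : ℝ≥0∞}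
    (h : MemLp id p ν) (hT : LipschitzWith K T) : MemLp id p (ν.map T) := by
  have hTν : AEStronglyMeasurable T ν := hT.continuous.comp_aestronglyMeasurable h.1
  rw [memLp_map_measure_iff hTν.aestronglyMeasurable_id_map hT.continuous.aemeasurable]
  have hT0 : LipschitzWith K fun x => T x - T 0 := by
    simpa using hT.sub (LipschitzWith.const (T 0))
  simpa [Function.comp_def, Pi.add_def] using
    (hT0.comp_memLp (by simp) h).add (memLp_const (T 0))

lemma totalVariance_map_le [InnerProductSpace ℝ E] [CompleteSpace E] [IsProbabilityMeasure ν]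
    (h : MemLp id 2 ν) (hT : LipschitzWith K T) :
    totalVariance (ν.map T) ≤ K ^ 2 * totalVariance ν := by
  have hTm : AEMeasurable T ν := hT.continuous.aemeasurable
  have : IsProbabilityMeasure (ν.map T) := Measure.isProbabilityMeasure_map hTm
  set m := ∫ x, x ∂ν
  calc totalVariance (ν.map T)
      ≤ ∫ y, ‖y - T m‖ ^ 2 ∂ν.map T :=
        totalVariance_le_integral_norm_sub_sq (h.map_of_lipschitzWith hT) (T m)
    _ = ∫ x, ‖T x - T m‖ ^ 2 ∂ν :=
        integral_map hTm (by fun_prop : Continuous fun y => ‖y - T m‖ ^ 2).aestronglyMeasurable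
    _ ≤ ∫ x, (K : ℝ) ^ 2 * ‖x - m‖ ^ 2 ∂ν := by
        refine integral_mono_of_nonneg (.of_forall fun x => by positivity)
          ((h.integrable_norm_sub_sq m).const_mul _) (.of_forall fun x => ?_)
        show ‖T x - T m‖ ^ 2 ≤ K ^ 2 * ‖x - m‖ ^ 2
        rw [← mul_pow]
        exact pow_le_pow_left₀ (norm_nonneg _) (hT.norm_sub_le x m) 2
    _ = K ^ 2 * totalVariance ν := integral_const_mul _ _

end Lipschitz

lemma LipschitzWith.id_sub_smul {E : Type*} [SeminormedAddCommGroup E] [NormedSpace ℝ E]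
    {g : E → E} {L : ℝ≥0} (hg : LipschitzWith L g) (γ : ℝ) :
    LipschitzWith (1 + ‖γ‖₊ * L) fun x => x - γ • g x :=
  LipschitzWith.id.sub ((lipschitzWith_smul γ).comp hg)

lemma one_add_mul_pow_le_exp {γ L T : ℝ} {n : ℕ} (hγ : 0 ≤ γ) (hL : 0 ≤ L)
    (hn : n * γ ≤ T) :
    (1 + γ * L) ^ n ≤ Real.exp (T * L) :=
  calc (1 + γ * L) ^ n ≤ Real.exp (γ * L) ^ n :=
        pow_le_pow_left₀ (by positivity) (by linarith [Real.add_one_le_exp (γ * L)]) n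
    _ = Real.exp ((n * γ) * L) := by rw [← Real.exp_nat_mul, mul_assoc]
    _ ≤ Real.exp (T * L) := Real.exp_le_exp.mpr (mul_le_mul_of_nonneg_right hn hL)

/-- **Control of the variance along the SVGD iterates.**

`μ 0 ∈ P₂(ℝ^d)` has finite variance and `μ (n+1) = (I - γ P_{μ_n} ∇log(μ_n/π))_# μ n`,
where `g n = P_{μ_n} ∇log(μ_n/π)` is the SVGD vector field at iteration `n`, assumed
`L`-Lipschitz for every `n` (which holds under the kernel bounds `‖k(x,·)‖_{H₀} ≤ B`,
`‖∇ₓk(x,·)‖_H ≤ B`, `∇log π` `M`-Lipschitz and bounded by `C_V`, `k` and `∇k`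
`D`-Lipschitz, with `L = C_V(D+1)+BM`).  Then for every `T > 0` and `n ≤ T/γ`,
`var(μ_n)^{1/2} ≤ var(μ_0)^{1/2} e^{TL}`, where
`var(μ) = E_{x∼μ} ‖x - E_{x'∼μ}[x']‖²`. -/
theorem svgd_variance_control {d : ℕ}
    (γ L : ℝ) (hγ : 0 < γ) (hL : 0 ≤ L)
    (μ : ℕ → Measure (EuclideanSpace ℝ (Fin d)))
    [∀ n, IsProbabilityMeasure (μ n)]
    -- finite variance (second moment) of μ 0
    (hvar0 : Integrable (fun x => ‖x‖ ^ 2) (μ 0))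
    -- the SVGD vector field g n = P_{μ_n} ∇log(μ_n/π)
    (g : ℕ → EuclideanSpace ℝ (Fin d) → EuclideanSpace ℝ (Fin d))
    -- SVGD update: μ_{n+1} = (I - γ g_n)_# μ_n
    (hrec : ∀ n, μ (n + 1) = Measure.map (fun x => x - γ • g n x) (μ n))
    -- z ↦ P_{μ_n} ∇log(μ_n/π)(z) is L-Lipschitz for every n
    (hLip : ∀ n x y, ‖g n x - g n y‖ ≤ L * ‖x - y‖) :
    ∀ T : ℝ, 0 < T → ∀ n : ℕ, (n : ℝ) ≤ T / γ →
      Real.sqrt (∫ x, ‖x - ∫ y, y ∂ μ n‖ ^ 2 ∂ μ n) ≤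
        Real.sqrt (∫ x, ‖x - ∫ y, y ∂ μ 0‖ ^ 2 ∂ μ 0) * Real.exp (T * L) := by
  intro T hT n hn
  set K : ℝ≥0 := 1 + ‖γ‖₊ * L.toNNReal
  have hg : ∀ n, LipschitzWith L.toNNReal (g n) := fun n =>
    LipschitzWith.of_dist_le' fun x y => by simpa only [dist_eq_norm] using hLip n x y
  have hstep : ∀ n, LipschitzWith K fun x => x - γ • g n x := fun n => (hg n).id_sub_smul γ
  have hmem : ∀ n, MemLp id 2 (μ n) := by
    intro n
    induction n with
    | zero => exact (memLp_two_iff_integrable_sq_norm aestronglyMeasurable_id).mpr hvar0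
    | succ n ih => exact hrec n ▸ ih.map_of_lipschitzWith (hstep n)
  have hgeom : Real.sqrt (totalVariance (μ n)) ≤ K ^ n * Real.sqrt (totalVariance (μ 0)) :=
    le_geom (u := fun k => Real.sqrt (totalVariance (μ k))) K.coe_nonneg n fun k _ => by
      rw [hrec k, ← Real.sqrt_sq K.coe_nonneg, ← Real.sqrt_mul (sq_nonneg _)]
      exact Real.sqrt_le_sqrt (totalVariance_map_le (hmem k) (hstep k))
  have hK : (K : ℝ) ^ n ≤ Real.exp (T * L) := by
    simpa [K, abs_of_pos hγ, Real.coe_toNNReal L hL] using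
      one_add_mul_pow_le_exp hγ.le hL ((le_div_iff₀ hγ).mp hn)
  calc Real.sqrt (totalVariance (μ n)) ≤ K ^ n * Real.sqrt (totalVariance (μ 0)) := hgeom
    _ ≤ Real.exp (T * L) * Real.sqrt (totalVariance (μ 0)) := by gcongr
    _ = _ := mul_comm _ _
end

section
/- Suppose ‖k(x,·)‖_{H₀} ≤ B and ‖∇_x k(x,·)‖_H ≤ B for all x, that ∇log π is M-Lipschitz, and that sup_n ∫ ‖x‖ dμ_n(x) < ∞ for a sequence (μ_n) in P₂(X). Then there exists C > 0 such that I_Stein(μ_n|π) ≤ C for all n. -/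
/-!
Each component of the Stein vector is the integral of `(∇log π)ᵢ φ + ∂ᵢφ`. Since `φ` and `∂ᵢφ`
are bounded by `B` and a Lipschitz score grows at most linearly, the norm of this integrand is
bounded by an affine function of `‖x‖`. Integrating it against a probability measure with first
moment at most `K` bounds every component, uniformly in `n`. Summing the `d` squared components
then bounds `I_Stein`.
-/

open MeasureTheory
open scoped RealInnerProductSpace NNReal

lemma norm_le_sqrt_sum_norm_sq {ι E : Type*} [Fintype ι] [SeminormedAddCommGroup E]
    (v : ι → E) (i : ι) : ‖v i‖ ≤ √(∑ j, ‖v j‖ ^ 2) := by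
  simpa [PiLp.norm_eq_of_L2] using PiLp.norm_apply_le (WithLp.toLp 2 v) i

lemma LipschitzWith.norm_le_norm_zero_add_mul {E F : Type*} [SeminormedAddCommGroup E]
    [SeminormedAddCommGroup F] {f : E → F} {K : ℝ≥0} (hf : LipschitzWith K f) (x : E) :
    ‖f x‖ ≤ ‖f 0‖ + K * ‖x‖ := by
  have h := hf.dist_le_mul x 0
  rw [dist_eq_norm, dist_zero_right] at h
  linarith [norm_le_insert' (f x) (f 0)]

lemma norm_integral_le_of_norm_le_affine {E H : Type*} [SeminormedAddCommGroup E]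
    [MeasurableSpace E] [NormedAddCommGroup H] [NormedSpace ℝ H]
    {μ : Measure E} [IsProbabilityMeasure μ] {g : E → H} {a b K : ℝ} (hb : 0 ≤ b)
    (hint : Integrable (fun x => ‖x‖) μ) (hmom : ∫ x, ‖x‖ ∂μ ≤ K)
    (hg : ∀ x, ‖g x‖ ≤ a + b * ‖x‖) :
    ‖∫ x, g x ∂μ‖ ≤ a + b * K :=
  calc ‖∫ x, g x ∂μ‖ ≤ ∫ x, (a + b * ‖x‖) ∂μ :=
        norm_integral_le_of_norm_le ((integrable_const a).add (hint.const_mul b))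
          (.of_forall hg)
    _ = a + b * ∫ x, ‖x‖ ∂μ := by
        rw [integral_add (integrable_const a) (hint.const_mul b), integral_const_mul]
        simp
    _ ≤ a + b * K := by gcongr

lemma norm_stein_integrand_le {ι H : Type*} [Fintype ι] [DecidableEq ι]
    [NormedAddCommGroup H] [NormedSpace ℝ H]
    {φ : EuclideanSpace ℝ ι → H} {Dφ : EuclideanSpace ℝ ι → EuclideanSpace ℝ ι →L[ℝ] H}
    {score : EuclideanSpace ℝ ι → EuclideanSpace ℝ ι} {B : ℝ} {L : ℝ≥0}
    (hφ : ∀ x, ‖φ x‖ ≤ B)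
    (hDφ : ∀ x, √(∑ i, ‖Dφ x (EuclideanSpace.single i 1)‖ ^ 2) ≤ B)
    (hscore : LipschitzWith L score) (x : EuclideanSpace ℝ ι) (i : ι) :
    ‖score x i • φ x + Dφ x (EuclideanSpace.single i 1)‖
      ≤ B * (‖score 0‖ + 1) + B * L * ‖x‖ := by
  have hB : 0 ≤ B := (norm_nonneg _).trans (hφ 0)
  have hcoord : |score x i| ≤ ‖score 0‖ + L * ‖x‖ :=
    (PiLp.norm_apply_le (score x) i).trans (hscore.norm_le_norm_zero_add_mul x)
  have hderiv : ‖Dφ x (EuclideanSpace.single i 1)‖ ≤ B :=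
    (norm_le_sqrt_sum_norm_sq (fun j => Dφ x (EuclideanSpace.single j 1)) i).trans (hDφ x)
  calc ‖score x i • φ x + Dφ x (EuclideanSpace.single i 1)‖
      ≤ |score x i| * ‖φ x‖ + ‖Dφ x (EuclideanSpace.single i 1)‖ := by
        simpa [norm_smul] using norm_add_le (score x i • φ x) (Dφ x (EuclideanSpace.single i 1))
    _ ≤ (‖score 0‖ + L * ‖x‖) * B + B := by gcongr; exact hφ x
    _ = B * (‖score 0‖ + 1) + B * L * ‖x‖ := by ring

theorem istein_uniformly_bounded_general {d : ℕ}
    {H₀ : Type*} [NormedAddCommGroup H₀] [InnerProductSpace ℝ H₀]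
    (φ : EuclideanSpace ℝ (Fin d) → H₀)
    (Dφ : EuclideanSpace ℝ (Fin d) → EuclideanSpace ℝ (Fin d) →L[ℝ] H₀)
    (B : ℝ)
    (hkB : ∀ x, ‖φ x‖ ≤ B)
    (hdkB : ∀ x, Real.sqrt (∑ i, ‖Dφ x (EuclideanSpace.single i 1)‖ ^ 2) ≤ B)
    -- the score ∇log π of the target, M-Lipschitz
    (scorePi : EuclideanSpace ℝ (Fin d) → EuclideanSpace ℝ (Fin d)) (M : ℝ)
    (hscoreLip : ∀ x y, ‖scorePi x - scorePi y‖ ≤ M * ‖x - y‖)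
    (μ : ℕ → Measure (EuclideanSpace ℝ (Fin d)))
    [∀ n, IsProbabilityMeasure (μ n)]
    -- uniformly bounded first moments: sup_n ∫ ‖x‖ dμ_n < ∞
    (hmom_int : ∀ n, Integrable (fun x => ‖x‖) (μ n))
    (K : ℝ) (hmom : ∀ n, ∫ x, ‖x‖ ∂ μ n ≤ K)
    -- S n = S_{μ_n} ∇log(μ_n/π), via integration by parts
    (S : ℕ → Fin d → H₀)
    (hS : ∀ n i, S n i =
      ∫ x, (scorePi x i • φ x + Dφ x (EuclideanSpace.single i 1)) ∂ μ n)
    (Istein : ℕ → ℝ)                -- n ↦ I_Stein(μ_n|π)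
    (hI : ∀ n, Istein n = ∑ i, ‖S n i‖ ^ 2) :
    ∃ C : ℝ, 0 < C ∧ ∀ n, Istein n ≤ C := by
  have hL : LipschitzWith (Real.toNNReal M) scorePi :=
    .of_dist_le' fun x y => by simpa only [dist_eq_norm] using hscoreLip x y
  have hB : 0 ≤ B := (norm_nonneg _).trans (hkB 0)
  set c := B * (‖scorePi 0‖ + 1) + B * Real.toNNReal M * K
  have hS_le : ∀ n i, ‖S n i‖ ≤ c := fun n i => by
    rw [hS n i]
    exact norm_integral_le_of_norm_le_affine (by positivity) (hmom_int n) (hmom n)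
      (norm_stein_integrand_le hkB hdkB hL · i)
  refine ⟨d * c ^ 2 + 1, by positivity, fun n => ?_⟩
  calc Istein n = ∑ i, ‖S n i‖ ^ 2 := hI n
    _ ≤ d * c ^ 2 := by
        simpa using Finset.sum_le_card_nsmul Finset.univ _ _
          fun i _ => pow_le_pow_left₀ (norm_nonneg _) (hS_le n i) 2
    _ ≤ d * c ^ 2 + 1 := by linarith

/-- **Uniformly bounded first moments imply a uniformly bounded Stein Fisher information.**

`X = ℝ^d`.  The RKHS `H₀` of the kernel `k` is modelled via a feature map `φ` with
`k x y = ⟪φ x, φ y⟫` (so `‖k(x,·)‖_{H₀} = ‖φ x‖`) and its derivative feature map `Dφ`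
(so `∂_{x_i} k(x,·)` corresponds to `Dφ x eᵢ`). Assumptions: `‖k(x,·)‖_{H₀} ≤ B` and
`‖∇ₓ k(x,·)‖_H ≤ B` for all `x`; `∇log π` (the score of `π ∝ e^{-V}`) is `M`-Lipschitz;
and `sup_n ∫‖x‖ dμ_n(x) < ∞`.  `S n = S_{μ_n}∇log(μ_n/π)` is given by its
integration-by-parts representation
`(S n)_i = ∫ [(∇log π(x))_i φ(x) + ∂_{x_i}φ(x)] dμ_n(x)`, and
`I_Stein(μ_n|π) = ‖S n‖²_H = ∑ᵢ ‖(S n)ᵢ‖²`.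
Conclusion: there is `C > 0` with `I_Stein(μ_n|π) ≤ C` for all `n`. -/
theorem istein_uniformly_bounded {d : ℕ}
    {H₀ : Type*} [NormedAddCommGroup H₀] [InnerProductSpace ℝ H₀] [CompleteSpace H₀]
    (k : EuclideanSpace ℝ (Fin d) → EuclideanSpace ℝ (Fin d) → ℝ)
    (φ : EuclideanSpace ℝ (Fin d) → H₀)
    (Dφ : EuclideanSpace ℝ (Fin d) → EuclideanSpace ℝ (Fin d) →L[ℝ] H₀)
    (hk : ∀ x y, k x y = ⟪φ x, φ y⟫)
    (hφdiff : ∀ x, HasFDerivAt φ (Dφ x) x)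
    (B : ℝ) (hB : 0 < B)
    (hkB : ∀ x, ‖φ x‖ ≤ B)
    (hdkB : ∀ x, Real.sqrt (∑ i, ‖Dφ x (EuclideanSpace.single i 1)‖ ^ 2) ≤ B)
    -- the score ∇log π of the target, M-Lipschitz
    (scorePi : EuclideanSpace ℝ (Fin d) → EuclideanSpace ℝ (Fin d)) (M : ℝ)
    (hscoreLip : ∀ x y, ‖scorePi x - scorePi y‖ ≤ M * ‖x - y‖)
    (μ : ℕ → Measure (EuclideanSpace ℝ (Fin d)))
    [∀ n, IsProbabilityMeasure (μ n)]
    -- uniformly bounded first moments: sup_n ∫ ‖x‖ dμ_n < ∞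
    (hmom_int : ∀ n, Integrable (fun x => ‖x‖) (μ n))
    (K : ℝ) (hmom : ∀ n, ∫ x, ‖x‖ ∂ μ n ≤ K)
    -- S n = S_{μ_n} ∇log(μ_n/π), via integration by parts
    (S : ℕ → Fin d → H₀)
    (hS : ∀ n i, S n i =
      ∫ x, (scorePi x i • φ x + Dφ x (EuclideanSpace.single i 1)) ∂ μ n)
    (hS_int : ∀ n i, Integrable
      (fun x => scorePi x i • φ x + Dφ x (EuclideanSpace.single i 1)) (μ n))
    (Istein : ℕ → ℝ)                -- n ↦ I_Stein(μ_n|π)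
    (hI : ∀ n, Istein n = ∑ i, ‖S n i‖ ^ 2) :
    ∃ C : ℝ, 0 < C ∧ ∀ n, Istein n ≤ C :=
  istein_uniformly_bounded_general φ Dφ B hkB hdkB scorePi M hscoreLip μ hmom_int K hmom S hS Istein
    hI
end
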